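/- Direct entanglement swapping is the worst-case action among the four quantum switch actions: for all real F_Tx, F_Rx with 1/2 < F_Tx < 1 and 1/2 < F_Rx < 1, the e2e fidelity of the direct swap is at most that of each distillation-assisted action, i.e. S(F_Tx, F_Rx) ≤ S(D(F_Tx), F_Rx), S(F_Tx, F_Rx) ≤ S(F_Tx, D(F_Rx)), and S(F_Tx, F_Rx) ≤ S(D(F_Tx), D(F_Rx)). -/
import Mathlib


/-- The entanglement swapping fidelity. -/
noncomputable def S (F₁ F₂ : ℝ) : ℝ :=
  1 / 4 + 3 / 4 * ((4 * F₁ - 1) / 3) * ((4 * F₂ - 1) / 3)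

/-- The Oxford distillation fidelity. -/
noncomputable def D (F : ℝ) : ℝ :=
  (F ^ 2 + ((1 - F) / 3) ^ 2) /
    (F ^ 2 + 2 * F * ((1 - F) / 3) + 5 * ((1 - F) / 3) ^ 2)

lemma Dle (F : ℝ) (h₁ : 1 / 2 < F) (h₂ : F < 1) : F ≤ D F := by
  have hden : (0:ℝ) < F ^ 2 + 2 * F * ((1 - F) / 3) + 5 * ((1 - F) / 3) ^ 2 := by
    nlinarith
  rw [D, le_div_iff₀ hden]
  nlinarith [mul_pos (mul_pos (sub_pos.2 h₂) (by linarith : (0:ℝ) < 2 * F - 1)) (by linarith : (0:ℝ) < 4 * F - 1)]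

lemma Smono (a b c : ℝ) (hab : a ≤ b) (hc : 1 / 2 < c) : S a c ≤ S b c := by
  unfold S; nlinarith

lemma Sc (a b : ℝ) : S a b = S b a := by unfold S; ring

/-- Direct entanglement swapping is the worst-case action among the four
quantum switch actions. -/
theorem direct_swap_worst_case (FTx FRx : ℝ)
    (hTx₁ : 1 / 2 < FTx) (hTx₂ : FTx < 1)
    (hRx₁ : 1 / 2 < FRx) (hRx₂ : FRx < 1) :
    S FTx FRx ≤ S (D FTx) FRx ∧ S FTx FRx ≤ S FTx (D FRx) ∧
      S FTx FRx ≤ S (D FTx) (D FRx) := by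
  have hdT := Dle FTx hTx₁ hTx₂
  have hdR := Dle FRx hRx₁ hRx₂
  refine ⟨Smono _ _ _ hdT hRx₁, ?_, ?_⟩
  · rw [Sc FTx (D FRx), Sc FTx FRx]; exact Smono _ _ _ hdR hTx₁
  · calc S FTx FRx ≤ S (D FTx) FRx := Smono _ _ _ hdT hRx₁
      _ = S FRx (D FTx) := Sc _ _
      _ ≤ S (D FRx) (D FTx) := Smono _ _ _ hdR (lt_of_lt_of_le hTx₁ hdT)
      _ = S (D FTx) (D FRx) := Sc _ _
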